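/- Let X be a topological space and define F : Opens(X) → Set by F(U) = π₀(U) (the set of path components of U), with F(V ⊆ U) induced by inclusion. Then F is a functor from the poset of open sets of X (ordered by inclusion) to the category of sets, and for any open cover 𝒰 of an open set U that is closed under the property that every finite intersection of members of 𝒰 is a union of members of 𝒰, with each member of 𝒰 path-connected, the universal map colim_{V ∈ 𝒰} π₀(V) → π₀(U) is a bijection. -/

import Mathlib

/-!
A compatible family `ψ` takes a single value on each path-connected `V ∈ 𝒰`, and two members
through a common point `x` give the same value, since some member through `x` lies in both.
This defines a function on the points of `U` that is constant on each member of the open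
cover, hence locally constant, hence constant along paths, so it descends to `π₀(U)`.
Uniqueness holds because every point of `U` lies in some member of `𝒰`.
-/

open TopologicalSpace

/-- The map on path components induced by a continuous map. -/
def pcMap {A B : Type*} [TopologicalSpace A] [TopologicalSpace B]
    {f : A → B} (hf : Continuous f) : ZerothHomotopy A → ZerothHomotopy B :=
  Quotient.map' f (fun _ _ h => ⟨(Joined.somePath h).map hf⟩)

/-- The map `π₀(V) → π₀(U)` induced by an inclusion of open sets `V ⊆ U`. -/
def pcIncl {X : Type*} [TopologicalSpace X] {V U : Opens X} (h : (V : Set X) ⊆ U) :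
    ZerothHomotopy (V : Set X) → ZerothHomotopy (U : Set X) :=
  pcMap (continuous_inclusion h)

theorem IsLocallyConstant.apply_eq_of_path {Y C : Type*} [TopologicalSpace Y] {f : Y → C}
    (hf : IsLocallyConstant f) {a b : Y} (γ : Path a b) : f a = f b := by
  simpa using (hf.comp_continuous γ.continuous).apply_eq_of_preconnectedSpace 0 1

section

variable {X : Type*} [TopologicalSpace X]

theorem pcIncl_refl (U : Opens X) : pcIncl (le_refl (U : Set X)) = id := by
  funext q
  induction q
  rfl

theorem pcIncl_trans {W V U : Opens X} (hWV : (W : Set X) ⊆ V) (hVU : (V : Set X) ⊆ U) :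
    pcIncl (hWV.trans hVU) = pcIncl hVU ∘ pcIncl hWV := by
  funext q
  induction q
  rfl

def LocallyInterClosed (𝒰 : Set (Opens X)) : Prop :=
  ∀ V ∈ 𝒰, ∀ W ∈ 𝒰, ∀ x ∈ (V : Set X) ∩ W, ∃ Z ∈ 𝒰, x ∈ (Z : Set X) ∧ (Z : Set X) ⊆ V ∩ W

theorem locallyInterClosed_of_finset_iInter {𝒰 : Set (Opens X)}
    (hinter : ∀ (s : Finset (Opens X)), ↑s ⊆ 𝒰 →
      ∀ x ∈ ⋂ V ∈ s, (V : Set X), ∃ Z ∈ 𝒰, x ∈ (Z : Set X) ∧ (Z : Set X) ⊆ ⋂ V ∈ s, (V : Set X)) :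
    LocallyInterClosed 𝒰 := by
  classical
  intro V hV W hW x hx
  have hpair : (({V, W} : Finset (Opens X)) : Set (Opens X)) ⊆ 𝒰 := by
    simp [Set.insert_subset_iff, hV, hW]
  simpa using hinter {V, W} hpair x (by simpa using hx)

section Gluing

variable {U : Opens X} {𝒰 : Set (Opens X)} {C : Type*}
  (hsub : ∀ V ∈ 𝒰, (V : Set X) ⊆ U) (hcover : ∀ x ∈ (U : Set X), ∃ V ∈ 𝒰, x ∈ (V : Set X))
  (ψ : ∀ V ∈ 𝒰, ZerothHomotopy (V : Set X) → C)

include hcover in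
theorem pcIncl_ext {μ μ' : ZerothHomotopy (U : Set X) → C}
    (h : ∀ V (hV : V ∈ 𝒰), μ ∘ pcIncl (hsub V hV) = μ' ∘ pcIncl (hsub V hV)) : μ = μ' := by
  funext q
  induction q with
  | mk x =>
    obtain ⟨V, hV, hxV⟩ := hcover x x.2
    exact congrFun (h V hV) (.mk ⟨x, hxV⟩)

def IsCompatibleFamily : Prop :=
  ∀ (V) (hV : V ∈ 𝒰) (W) (hW : W ∈ 𝒰) (hVW : (V : Set X) ⊆ W), ψ W hW ∘ pcIncl hVW = ψ V hV

theorem apply_mk_eq_of_mem_inter (hloc : LocallyInterClosed 𝒰) (hψ : IsCompatibleFamily ψ)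
    {V W : Opens X} (hV : V ∈ 𝒰) (hW : W ∈ 𝒰) {x : X} (hxV : x ∈ (V : Set X))
    (hxW : x ∈ (W : Set X)) :
    ψ V hV (.mk ⟨x, hxV⟩) = ψ W hW (.mk ⟨x, hxW⟩) := by
  obtain ⟨Z, hZ, hxZ, hZVW⟩ := hloc V hV W hW x ⟨hxV, hxW⟩
  exact (congrFun (hψ Z hZ V hV (hZVW.trans Set.inter_subset_left)) (.mk ⟨x, hxZ⟩)).trans
    (congrFun (hψ Z hZ W hW (hZVW.trans Set.inter_subset_right)) (.mk ⟨x, hxZ⟩)).symm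

noncomputable def coverGlue (x : (U : Set X)) : C :=
  ψ _ (hcover x x.2).choose_spec.1 (.mk ⟨x, (hcover x x.2).choose_spec.2⟩)

theorem coverGlue_eq (hloc : LocallyInterClosed 𝒰) (hψ : IsCompatibleFamily ψ)
    (x : (U : Set X)) {V : Opens X} (hV : V ∈ 𝒰) (hxV : (x : X) ∈ (V : Set X)) :
    coverGlue hcover ψ x = ψ V hV (.mk ⟨x, hxV⟩) :=
  apply_mk_eq_of_mem_inter ψ hloc hψ _ hV _ hxV

theorem isLocallyConstant_coverGlue (hpath : ∀ V ∈ 𝒰, IsPathConnected (V : Set X))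
    (hloc : LocallyInterClosed 𝒰) (hψ : IsCompatibleFamily ψ) :
    IsLocallyConstant (coverGlue hcover ψ) := by
  refine (IsLocallyConstant.iff_exists_open _).2 fun x => ?_
  obtain ⟨V, hV, hxV⟩ := hcover x x.2
  have : PathConnectedSpace (V : Set X) := isPathConnected_iff_pathConnectedSpace.1 (hpath V hV)
  refine ⟨Subtype.val ⁻¹' V, V.isOpen.preimage continuous_subtype_val, hxV, fun y hyV => ?_⟩
  rw [coverGlue_eq hcover ψ hloc hψ y hV hyV, coverGlue_eq hcover ψ hloc hψ x hV hxV]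
  exact congrArg _ (Subsingleton.elim _ _)

include hcover in
theorem existsUnique_comp_pcIncl_eq (hpath : ∀ V ∈ 𝒰, IsPathConnected (V : Set X))
    (hloc : LocallyInterClosed 𝒰) (hψ : IsCompatibleFamily ψ) :
    ∃! μ : ZerothHomotopy (U : Set X) → C, ∀ V (hV : V ∈ 𝒰), μ ∘ pcIncl (hsub V hV) = ψ V hV := by
  have hglue := isLocallyConstant_coverGlue hcover ψ hpath hloc hψ
  set μ := ZerothHomotopy.lift (coverGlue hcover ψ) fun _ _ γ => hglue.apply_eq_of_path γ
  have hμ : ∀ V (hV : V ∈ 𝒰), μ ∘ pcIncl (hsub V hV) = ψ V hV := by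
    intro V hV
    funext q
    induction q with
    | mk x => exact coverGlue_eq hcover ψ hloc hψ _ hV x.2
  exact ⟨μ, hμ, fun μ' hμ' => pcIncl_ext hsub hcover fun V hV => (hμ' V hV).trans (hμ V hV).symm⟩

end Gluing

end

/-- `U ↦ π₀(U)` is functorial on open sets of `X` (it sends identity
inclusions to the identity and composed inclusions to composites), and for any
open cover `𝒰` of an open set `U` by path-connected open sets such that every
finite intersection of members of `𝒰` is a union of members of `𝒰`, the cocone
`{π₀(V) → π₀(U)}_{V ∈ 𝒰}` is a colimit cocone in `Set`: for every compatible
family of maps `ψ_V : π₀(V) → C`, there is a unique `μ : π₀(U) → C` with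
`μ ∘ π₀(V ⊆ U) = ψ_V` (i.e. the universal map `colim_{V ∈ 𝒰} π₀(V) → π₀(U)`
is a bijection). -/
theorem pi0_is_constructible_cosheaf {X : Type*} [TopologicalSpace X]
 :
    -- functoriality of `F = π₀`:
    (∀ (U : Opens X), pcIncl (le_refl (U : Set X)) = id) ∧
    (∀ (W V U : Opens X) (hWV : (W : Set X) ⊆ V) (hVU : (V : Set X) ⊆ U),
      pcIncl (hWV.trans hVU) = pcIncl hVU ∘ pcIncl hWV) ∧
    -- the gluing (cosheaf) axiom:
    ∀ (U : Opens X) (𝒰 : Set (Opens X))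
      (hsub : ∀ V ∈ 𝒰, (V : Set X) ⊆ U)
      (hcover : ∀ x ∈ (U : Set X), ∃ V ∈ 𝒰, x ∈ (V : Set X))
      (hpath : ∀ V ∈ 𝒰, IsPathConnected (V : Set X))
      (hinter : ∀ (s : Finset (Opens X)), ↑s ⊆ 𝒰 →
        ∀ x ∈ ⋂ V ∈ s, (V : Set X), ∃ Z ∈ 𝒰, x ∈ (Z : Set X) ∧
          (Z : Set X) ⊆ ⋂ V ∈ s, (V : Set X))
      (C : Type) (ψ : ∀ V ∈ 𝒰, ZerothHomotopy (V : Set X) → C)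
      (hψ : ∀ (V) (hV : V ∈ 𝒰) (W) (hW : W ∈ 𝒰) (hVW : (V : Set X) ⊆ W),
        ψ W hW ∘ pcIncl hVW = ψ V hV),
      ∃! μ : ZerothHomotopy (U : Set X) → C,
        ∀ (V) (hV : V ∈ 𝒰), μ ∘ pcIncl (hsub V hV) = ψ V hV :=
  ⟨pcIncl_refl, fun _ _ _ => pcIncl_trans,
    fun _ _ hsub hcover hpath hinter _ ψ hψ => existsUnique_comp_pcIncl_eq hsub hcover ψ hpath
      (locallyInterClosed_of_finset_iInter hinter) hψ⟩
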